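/- In the setting of the previous statement, suppose additionally that φ₀^δ(∅) ⊊ N₀ for every δ < α, that ∇(X) = ∅ whenever X ⊊ N₀, and that φ₁^γ(∅) ⊊ φ₁^{γ+1}(∅) for all γ < β while φ₁^β(∅) = N₁. Then ψ^{α+γ}(∅) ∩ N₁ = φ₁^γ(∅) for every ordinal γ, and ψ converges to its least fixed point N in exactly α + β steps, i.e., ψ^{α+β}(∅) = N and ψ^{η}(∅) ⊊ ψ^{η+1}(∅) for every η < α + β. -/

import Mathlib

/-!
Up to stage `α` the set `∇(X ∩ N₀)` (`nab` below) is empty, so `ψ` iterates exactly like `φ₀`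
and reaches `N₀`. From then on `N₀` is a fixed part of every iterate: `φ₀ N₀ = N₀` and
`∇ N₀ = N₁`, so `ψ (N₀ ∪ X) = N₀ ∪ φ₁ X` for `X ⊆ N₁`, and `ψ^{α+γ}(∅) = N₀ ∪ φ₁^γ(∅)`.
Strictness in the second phase is read off on `N₁`, where the iterates of `ψ` are those of `φ₁`.
-/

open Set

universe u v
/-- Ordinal-indexed iterates of a map on a powerset, starting from ∅,
taking unions at limit stages. -/
noncomputable def iter {A : Type u} (f : Set A → Set A) (o : Ordinal.{v}) : Set A :=
  Ordinal.limitRecOn o ∅ (fun _ ih => f ih)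
    (fun o _ ih => ⋃ (b : Ordinal.{v}) (h : b < o), ih b h)

section Iter

variable {A : Type u} {f g : Set A → Set A}

lemma iter_zero (f : Set A → Set A) : iter f (0 : Ordinal.{v}) = ∅ :=
  Ordinal.limitRecOn_zero ..

lemma iter_succ (f : Set A → Set A) (o : Ordinal.{v}) : iter f (o + 1) = f (iter f o) :=
  Ordinal.limitRecOn_add_one ..

lemma iter_limit (f : Set A → Set A) {o : Ordinal.{v}} (h : Order.IsSuccLimit o) :
    iter f o = ⋃ b < o, iter f b :=
  Ordinal.limitRecOn_limit _ _ _ _ h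

lemma iter_subset_iter_succ (hf : Monotone f) (o : Ordinal.{v}) : iter f o ⊆ iter f (o + 1) := by
  induction o using Ordinal.limitRecOn with
  | zero => rw [iter_zero]; exact empty_subset _
  | add_one o ih => rw [iter_succ, iter_succ]; exact hf ih
  | limit o ho ih =>
      rw [iter_limit f ho, iter_succ, iter_limit f ho]
      refine iUnion₂_subset fun b hb => (ih b hb).trans ?_
      rw [iter_succ]
      exact hf (subset_iUnion₂ (s := fun b _ => iter f b) b hb)

lemma iter_subset {T : Set A} (hT : ∀ S, f S ⊆ T) (o : Ordinal.{v}) : iter f o ⊆ T := by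
  induction o using Ordinal.limitRecOn with
  | zero => rw [iter_zero]; exact empty_subset _
  | add_one o _ => rw [iter_succ]; exact hT _
  | limit o ho ih => rw [iter_limit f ho]; exact iUnion₂_subset ih

lemma map_iter_eq_self (hf : Monotone f) {o : Ordinal.{v}} (h : ∀ S, f S ⊆ iter f o) :
    f (iter f o) = iter f o :=
  subset_antisymm (h _) (iter_succ f o ▸ iter_subset_iter_succ hf o)

lemma iter_eq_iter_of_le {α : Ordinal.{v}} (hfg : ∀ δ < α, g (iter f δ) = f (iter f δ)) :
    ∀ δ ≤ α, iter g δ = iter f δ := by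
  intro δ
  induction δ using Ordinal.limitRecOn with
  | zero => intro _; rw [iter_zero, iter_zero]
  | add_one δ ih =>
      intro h
      have hδ : δ < α := Order.add_one_le_iff.1 h
      rw [iter_succ, iter_succ, ih hδ.le, hfg δ hδ]
  | limit δ hδ ih =>
      intro h
      rw [iter_limit g hδ, iter_limit f hδ]
      exact iUnion₂_congr fun b hb => ih b hb (hb.le.trans h)

lemma biUnion_lt_add (s : Ordinal.{v} → Set A) (α γ : Ordinal.{v}) :
    ⋃ b < α + γ, s b = (⋃ b < α, s b) ∪ ⋃ d < γ, s (α + d) := by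
  ext x
  simp only [mem_union, mem_iUnion, exists_prop]
  constructor
  · rintro ⟨b, hb, hx⟩
    rcases lt_or_ge b α with hbα | hαb
    · exact Or.inl ⟨b, hbα, hx⟩
    · obtain ⟨d, rfl⟩ := exists_add_of_le hαb
      exact Or.inr ⟨d, (add_lt_add_iff_left α).1 hb, hx⟩
  · rintro (⟨b, hb, hx⟩ | ⟨d, hd, hx⟩)
    · exact ⟨b, hb.trans_le le_self_add, hx⟩
    · exact ⟨α + d, (add_lt_add_iff_left α).2 hd, hx⟩

lemma iter_add_eq_union {α : Ordinal.{v}} {C : Set A} (hC : iter g α = C)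
    (hlt : ∀ b < α, iter g b ⊆ C) (hstep : ∀ γ : Ordinal.{v}, g (C ∪ iter f γ) = C ∪ f (iter f γ))
    (γ : Ordinal.{v}) : iter g (α + γ) = C ∪ iter f γ := by
  induction γ using Ordinal.limitRecOn with
  | zero => rw [add_zero, iter_zero, union_empty, hC]
  | add_one γ ih => rw [← add_assoc, iter_succ, ih, hstep, iter_succ]
  | limit γ hγ ih =>
      have hC_sub : C ⊆ ⋃ d < γ, (C ∪ iter f d) :=
        subset_union_left.trans (subset_iUnion₂ (s := fun d _ => C ∪ iter f d) 0 hγ.pos)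
      rw [iter_limit g (Ordinal.isSuccLimit_add α hγ), biUnion_lt_add,
        iUnion₂_congr fun d hd => ih d hd, iter_limit f hγ,
        union_eq_right.2 ((iUnion₂_subset hlt).trans hC_sub)]
      exact subset_antisymm
        (iUnion₂_subset fun d hd =>
          union_subset_union_right C (subset_iUnion₂ (s := fun b _ => iter f b) d hd))
        (union_subset hC_sub (iUnion₂_mono fun _ _ => subset_union_right))

end Iter

lemma Set.union_inter_eq_of_disjoint {A : Type u} {s t u : Set A} (hsu : Disjoint s u)
    (htu : t ⊆ u) : (s ∪ t) ∩ u = t := by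
  rw [union_inter_distrib_right, hsu.inter_eq, empty_union, inter_eq_left.2 htu]

section SequentialComposition

variable {N : Type u} {N₀ N₁ : Set N} {φ₀ φ₁ nab ψ : Set N → Set N}

lemma psi_eq_of_ssubset (hψ : ∀ X, ψ X = φ₀ (X ∩ N₀) ∪ (φ₁ (X ∩ N₁) ∩ nab (X ∩ N₀)))
    (hnab : ∀ X, X ⊂ N₀ → nab X = ∅) {X : Set N} (hX : X ⊂ N₀) : ψ X = φ₀ X := by
  rw [hψ, inter_eq_left.2 hX.subset, hnab X hX, inter_empty, union_empty]

lemma psi_union_eq (hψ : ∀ X, ψ X = φ₀ (X ∩ N₀) ∪ (φ₁ (X ∩ N₁) ∩ nab (X ∩ N₀)))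
    (hdis : Disjoint N₀ N₁) (hφ₀ : φ₀ N₀ = N₀) (hφ₁ : ∀ S, φ₁ S ⊆ N₁) (hnab : nab N₀ = N₁)
    {X : Set N} (hX : X ⊆ N₁) : ψ (N₀ ∪ X) = N₀ ∪ φ₁ X := by
  rw [hψ, union_inter_cancel_left, union_inter_eq_of_disjoint hdis hX, hφ₀, hnab,
    inter_eq_left.2 (hφ₁ X)]

end SequentialComposition

theorem stmt18_general {N : Type u} (N₀ N₁ : Set N) (hdis : Disjoint N₀ N₁)
    (hun : N₀ ∪ N₁ = Set.univ)
    (φ₀ φ₁ nab : Set N → Set N)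
    (h0 : Monotone φ₀)
    (hr0 : ∀ S, φ₀ S ⊆ N₀) (hr1 : ∀ S, φ₁ S ⊆ N₁)
    (hdN : nab N₀ = N₁) (hdempty : ∀ X, X ⊂ N₀ → nab X = ∅)
    (ψ : Set N → Set N)
    (hψ : ∀ X, ψ X = φ₀ (X ∩ N₀) ∪ (φ₁ (X ∩ N₁) ∩ nab (X ∩ N₀)))
    (α β : Ordinal.{v})
    (hα : iter φ₀ α = N₀) (hlt0 : ∀ δ < α, iter φ₀ δ ⊂ N₀)
    (hstep0 : ∀ δ < α, iter φ₀ δ ⊂ iter φ₀ (δ + 1))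
    (hβ : iter φ₁ β = N₁)
    (hstep1 : ∀ γ < β, iter φ₁ γ ⊂ iter φ₁ (γ + 1)) :
    (∀ γ : Ordinal.{v}, iter ψ (α + γ) ∩ N₁ = iter φ₁ γ) ∧
      iter ψ (α + β) = Set.univ ∧
      (∀ η < α + β, iter ψ η ⊂ iter ψ (η + 1)) := by
  have hsub0 : ∀ δ : Ordinal.{v}, iter φ₀ δ ⊆ N₀ := iter_subset hr0
  have hsub1 : ∀ γ : Ordinal.{v}, iter φ₁ γ ⊆ N₁ := iter_subset hr1
  have hfix : φ₀ N₀ = N₀ := hα ▸ map_iter_eq_self h0 (hα ▸ hr0)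
  have first_phase : ∀ δ ≤ α, iter ψ δ = iter φ₀ δ :=
    iter_eq_iter_of_le fun δ hδ => psi_eq_of_ssubset hψ hdempty (hlt0 δ hδ)
  have second_phase : ∀ γ : Ordinal.{v}, iter ψ (α + γ) = N₀ ∪ iter φ₁ γ :=
    iter_add_eq_union (by rw [first_phase α le_rfl, hα])
      (fun b hb => first_phase b hb.le ▸ hsub0 b)
      (fun γ => psi_union_eq hψ hdis hfix hr1 hdN (hsub1 γ))
  have trace : ∀ γ : Ordinal.{v}, iter ψ (α + γ) ∩ N₁ = iter φ₁ γ := fun γ => by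
    rw [second_phase, union_inter_eq_of_disjoint hdis (hsub1 γ)]
  refine ⟨trace, by rw [second_phase, hβ, hun], fun η hη => ?_⟩
  rcases lt_or_ge η α with hηα | hαη
  · rw [first_phase η hηα.le, first_phase (η + 1) (Order.add_one_le_iff.2 hηα)]
    exact hstep0 η hηα
  · obtain ⟨γ, rfl⟩ := exists_add_of_le hαη
    have hγ := hstep1 γ ((add_lt_add_iff_left α).1 hη)
    rw [add_assoc]
    refine ⟨?_, fun h => hγ.2 ?_⟩
    · rw [second_phase, second_phase]
      exact union_subset_union_right N₀ hγ.subset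
    · rw [← trace γ, ← trace (γ + 1)]
      exact inter_subset_inter_left N₁ h

theorem stmt18 {N : Type u} (N₀ N₁ : Set N) (hdis : Disjoint N₀ N₁)
    (hun : N₀ ∪ N₁ = Set.univ)
    (φ₀ φ₁ nab : Set N → Set N)
    (h0 : Monotone φ₀) (h1 : Monotone φ₁) (hd : Monotone nab)
    (hr0 : ∀ S, φ₀ S ⊆ N₀) (hr1 : ∀ S, φ₁ S ⊆ N₁) (hrd : ∀ S, nab S ⊆ N₁)
    (hdN : nab N₀ = N₁) (hdempty : ∀ X, X ⊂ N₀ → nab X = ∅)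
    (ψ : Set N → Set N)
    (hψ : ∀ X, ψ X = φ₀ (X ∩ N₀) ∪ (φ₁ (X ∩ N₁) ∩ nab (X ∩ N₀)))
    (α β : Ordinal.{v})
    (hα : iter φ₀ α = N₀) (hlt0 : ∀ δ < α, iter φ₀ δ ⊂ N₀)
    (hstep0 : ∀ δ < α, iter φ₀ δ ⊂ iter φ₀ (δ + 1))
    (hβ : iter φ₁ β = N₁)
    (hstep1 : ∀ γ < β, iter φ₁ γ ⊂ iter φ₁ (γ + 1)) :
    (∀ γ : Ordinal.{v}, iter ψ (α + γ) ∩ N₁ = iter φ₁ γ) ∧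
      iter ψ (α + β) = Set.univ ∧
      (∀ η < α + β, iter ψ η ⊂ iter ψ (η + 1)) :=
  stmt18_general N₀ N₁ hdis hun φ₀ φ₁ nab h0 hr0 hr1 hdN hdempty ψ hψ α β hα hlt0 hstep0 hβ hstep1
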